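/- arXiv:2505.06769 — 3 statements merged into one kernel-verified Lean document; each statement's English description precedes it below -/
import Mathlib

section
/- Let M be a Markov chain with k ≥ 1 levels in which every state can reach T along edges, with weight function w : T → [0,∞), reachability Bellman update L, and initial vectors v̲_0, v̄_0. Then for every integer t ≥ 1, every 0 ≤ i ≤ k, and every state s in level ℓ_i: (L^{k·t} v̄_0)(s) − (L^{k·t} v̲_0)(s) ≤ (1 − p_min^i)·(1 − p_min^k)^{t−1}·w_max, where w_max := max_{t ∈ T} w(t). -/
/-- A finite Markov chain: transition function `δ` (nonnegative, rows sum to 1)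
together with a set `T` of absorbing target states. There is an edge `s → s'`
iff `δ s s' > 0`. -/
structure MC (S : Type) [Fintype S] [DecidableEq S] where
  δ : S → S → ℝ
  T : Finset S
  nonneg : ∀ s s' : S, 0 ≤ δ s s'
  rowsum : ∀ s : S, ∑ s' : S, δ s s' = 1
  absorbing : ∀ t ∈ T, δ t t = 1

variable {S : Type} [Fintype S] [DecidableEq S]

/-- Edge relation of a Markov chain: `s → s'` iff `δ s s' > 0`. -/
def MC.edge (M : MC S) (a b : S) : Prop := 0 < M.δ a b

/-- `pathLen r n a b`: there is a path of length `n` from `a` to `b` along `r`. -/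
def pathLen (r : S → S → Prop) : ℕ → S → S → Prop
  | 0 => fun a b => a = b
  | n + 1 => fun a c => ∃ b, r a b ∧ pathLen r n b c

/-- `reaches r A s`: `s` can reach the set `A` along the relation `r`. -/
def reaches (r : S → S → Prop) (A : Set S) (s : S) : Prop :=
  ∃ n, ∃ a ∈ A, pathLen r n s a

/-- Length of a shortest path from `s` to the set `A` along `r`. -/
noncomputable def distTo (r : S → S → Prop) (A : Set S) (s : S) : ℕ :=
  sInf {n | ∃ a ∈ A, pathLen r n s a}

/-- Level `0`: the targets together with all states that cannot reach the targets. -/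
def MC.level0 (M : MC S) : Set S :=
  {s | s ∈ M.T ∨ ¬ reaches M.edge (M.T : Set S) s}

/-- The levels of a Markov chain: `ℓ_0` is `level0`, and for `i ≥ 1`, `ℓ_i` is the
set of states whose shortest edge-path distance to `ℓ_0` is exactly `i`. -/
noncomputable def MC.levelSet (M : MC S) : ℕ → Set S
  | 0 => M.level0
  | i + 1 => {s | distTo M.edge M.level0 s = i + 1}

/-- `M` has (exactly) `k` levels: `ℓ_k` is the last nonempty level. -/
def MC.hasLevels (M : MC S) (k : ℕ) : Prop :=
  (M.levelSet k).Nonempty ∧ ∀ i, k < i → M.levelSet i = ∅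

/-- One-step transition matrix of the Markov chain. -/
noncomputable def MC.P (M : MC S) : Matrix S S ℝ := Matrix.of M.δ

/-- Weighted reachability value `val(s) = E_s[w(X_{t*}) · 1{t* < ∞}]`, where `t*` is
the first hitting time of `T`. Since `T` is absorbing, this equals the supremum
(monotone limit) over `n` of `∑_{t ∈ T} (δⁿ)(s,t)·w(t)`. -/
noncomputable def MC.reachVal (M : MC S) (w : S → ℝ) (s : S) : ℝ :=
  ⨆ n : ℕ, ∑ t ∈ M.T, (M.P ^ n) s t * w t

/-- Stochastic shortest path value `val(s) = E_s[∑_{t=0}^{t*} w(X_t)]`, where `t*` is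
the first hitting time of `T`: the expected weight collected strictly before `T`
(states outside `T`, counted via the `n`-step distributions) plus the expected weight
of the first target state hit. -/
noncomputable def MC.sspVal (M : MC S) (w : S → ℝ) (s : S) : ℝ :=
  (∑' n : ℕ, ∑ s' ∈ Finset.univ.filter (fun x => x ∉ M.T), (M.P ^ n) s s' * w s')
    + M.reachVal w s

/-- Smallest positive transition probability of the Markov chain. -/
noncomputable def MC.pmin (M : MC S) : ℝ :=
  sInf {p : ℝ | 0 < p ∧ ∃ s s' : S, M.δ s s' = p}

/-- Reachability Bellman update. -/
noncomputable def MC.reachUpdate (M : MC S) (w : S → ℝ) (v : S → ℝ) : S → ℝ :=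
  fun s => if s ∈ M.T then w s else ∑ s' : S, M.δ s s' * v s'

/-- SSP Bellman update. -/
noncomputable def MC.sspUpdate (M : MC S) (w : S → ℝ) (v : S → ℝ) : S → ℝ :=
  fun s => if s ∈ M.T then w s else w s + ∑ s' : S, M.δ s s' * v s'

/-- The reduced Markov chain `M[s = ·]`: the state `s` is made absorbing (its row of
`δ` replaced by the point mass at `s`) and added to the target set. -/
def MC.reduce (M : MC S) (s : S) : MC S where
  δ := fun a b => if a = s then (if b = s then 1 else 0) else M.δ a b
  T := insert s M.T
  nonneg := by
    intro a b
    by_cases h : a = s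
    · by_cases h' : b = s <;> simp [h, h']
    · simpa [h] using M.nonneg a b
  rowsum := by
    intro a
    by_cases h : a = s
    · simp [h]
    · simpa [h] using M.rowsum a
  absorbing := by
    intro t ht
    rcases Finset.mem_insert.mp ht with h | h
    · simp [h]
    · by_cases h' : t = s
      · simp [h']
      · simpa [h'] using M.absorbing t h

/-- Probability, in `M`, of ever visiting the state `s` when starting from `a`,
i.e. `P_a(∃ t ≥ 0, X_t = s)` (computed as a reachability value after making `s`
absorbing, which does not change the dynamics before the first visit to `s`). -/
noncomputable def MC.hitProb (M : MC S) (a s : S) : ℝ :=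
  (M.reduce s).reachVal (fun b => if b = s then 1 else 0) a

/-- Probability of having reached `T` within `i` steps, `P_s(∃ t ≤ i, X_t ∈ T)`;
since `T` is absorbing this equals `∑_{t ∈ T} (δ^i)(s,t)`. -/
noncomputable def MC.hitBy (M : MC S) (s : S) (i : ℕ) : ℝ :=
  ∑ t ∈ M.T, (M.P ^ i) s t

/-!
The gap between the upper and lower iterates is `w_max` times the probability `missProb n s`
of not having reached `T` within `n` steps, and the latter is submultiplicative:
`missProb (a + b) ≤ missProb a · sup missProb b`. A state of level `i` has a path of length `i`
into `T`, which is followed with probability at least `p_min^i`; since every state lies in some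
level `≤ k`, every state misses `T` within `k` steps with probability at most `1 - p_min^k`.
-/

lemma reaches.exists_pathLen_distTo {α : Type} {r : α → α → Prop} {A : Set α} {s : α}
    (h : reaches r A s) : ∃ a ∈ A, pathLen r (distTo r A s) s a :=
  Nat.sInf_mem h

namespace MC

variable (M : MC S)

lemma δ_le_one (s s' : S) : M.δ s s' ≤ 1 :=
  (Finset.single_le_sum (fun b _ => M.nonneg s b) (Finset.mem_univ s')).trans_eq (M.rowsum s)

lemma pmin_nonneg : 0 ≤ M.pmin :=
  Real.sInf_nonneg fun _ hp => hp.1.le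

lemma pmin_le {s s' : S} (h : M.edge s s') : M.pmin ≤ M.δ s s' := by
  have hfin : {p : ℝ | 0 < p ∧ ∃ s s' : S, M.δ s s' = p}.Finite :=
    (Set.finite_range fun x : S × S => M.δ x.1 x.2).subset
      (by rintro p ⟨_, s, s', rfl⟩; exact ⟨(s, s'), rfl⟩)
  exact csInf_le hfin.bddBelow ⟨h, s, s', rfl⟩

lemma pmin_le_one : M.pmin ≤ 1 := by
  by_cases h : ∃ s s', M.edge s s'
  · obtain ⟨s, s', hss'⟩ := h
    exact (M.pmin_le hss').trans (M.δ_le_one s s')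
  · push Not at h
    have hempty : {p : ℝ | 0 < p ∧ ∃ s s' : S, M.δ s s' = p} = ∅ := by
      ext p
      simp only [Set.mem_ofPred_eq, Set.mem_empty_iff_false, iff_false, not_and]
      rintro hp ⟨s, s', rfl⟩
      exact h s s' hp
    simp [pmin, hempty]

lemma one_sub_pmin_pow_nonneg (n : ℕ) : 0 ≤ 1 - M.pmin ^ n :=
  sub_nonneg.mpr (pow_le_one₀ M.pmin_nonneg M.pmin_le_one)

lemma level0_subset_T (hreach : ∀ a : S, reaches M.edge (M.T : Set S) a) :
    M.level0 ⊆ M.T := fun a ha => ha.resolve_right (not_not.mpr (hreach a))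

lemma exists_pathLen_distTo_level0 (hreach : ∀ a : S, reaches M.edge (M.T : Set S) a) (s : S) :
    ∃ a ∈ M.T, pathLen M.edge (distTo M.edge M.level0 s) s a := by
  obtain ⟨n, a, ha, hpath⟩ := hreach s
  obtain ⟨b, hb, hpath'⟩ :=
    reaches.exists_pathLen_distTo (A := M.level0) ⟨n, a, Or.inl ha, hpath⟩
  exact ⟨b, M.level0_subset_T hreach hb, hpath'⟩

lemma exists_pathLen_of_mem_levelSet (hreach : ∀ a : S, reaches M.edge (M.T : Set S) a)
    {i : ℕ} {s : S} (hs : s ∈ M.levelSet i) : ∃ a ∈ M.T, pathLen M.edge i s a := by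
  cases i with
  | zero => exact ⟨s, M.level0_subset_T hreach hs, rfl⟩
  | succ i =>
    have hdist : distTo M.edge M.level0 s = i + 1 := hs
    simpa only [hdist] using M.exists_pathLen_distTo_level0 hreach s

lemma exists_pathLen_le_of_hasLevels (hreach : ∀ a : S, reaches M.edge (M.T : Set S) a)
    {k : ℕ} (hlev : M.hasLevels k) (s : S) : ∃ m ≤ k, ∃ a ∈ M.T, pathLen M.edge m s a := by
  refine ⟨distTo M.edge M.level0 s, ?_, M.exists_pathLen_distTo_level0 hreach s⟩
  by_contra! hk
  have hs : s ∈ M.levelSet (distTo M.edge M.level0 s) := by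
    obtain ⟨m, hm⟩ := Nat.exists_eq_succ_of_ne_zero (by omega : distTo M.edge M.level0 s ≠ 0)
    rw [hm]
    exact hm
  simp [hlev.2 _ hk] at hs

/-- The probability of not having reached `T` within `n` steps, computed by value iteration
with zero weight from the indicator of the complement of `T`. -/
noncomputable def missProb (n : ℕ) : S → ℝ :=
  (M.reachUpdate 0)^[n] fun s => if s ∈ M.T then 0 else 1

lemma missProb_zero (s : S) : M.missProb 0 s = if s ∈ M.T then 0 else 1 := rfl

lemma missProb_succ (n : ℕ) (s : S) :
    M.missProb (n + 1) s = if s ∈ M.T then 0 else ∑ b : S, M.δ s b * M.missProb n b :=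
  congrFun (Function.iterate_succ_apply' _ _ _) s

lemma missProb_of_mem {s : S} (hs : s ∈ M.T) (n : ℕ) : M.missProb n s = 0 := by
  cases n <;> simp [missProb_zero, missProb_succ, hs]

lemma missProb_mem_Icc (n : ℕ) (s : S) : M.missProb n s ∈ Set.Icc 0 1 := by
  induction n generalizing s with
  | zero => by_cases hs : s ∈ M.T <;> simp [missProb_zero, hs]
  | succ n ih =>
    rw [missProb_succ]
    split_ifs
    · simp
    refine ⟨Finset.sum_nonneg fun b _ => mul_nonneg (M.nonneg s b) (ih b).1, ?_⟩
    calc ∑ b : S, M.δ s b * M.missProb n b ≤ ∑ b : S, M.δ s b :=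
          Finset.sum_le_sum fun b _ => mul_le_of_le_one_right (M.nonneg s b) (ih b).2
      _ = 1 := M.rowsum s

lemma missProb_add_le {b : ℕ} {B : ℝ} (hB : ∀ c, M.missProb b c ≤ B) (a : ℕ) (s : S) :
    M.missProb (a + b) s ≤ M.missProb a s * B := by
  induction a generalizing s with
  | zero => by_cases hs : s ∈ M.T <;> simp [missProb_zero, missProb_of_mem, hs, hB s]
  | succ a ih =>
    rw [Nat.succ_add, missProb_succ, missProb_succ]
    split_ifs
    · simp
    rw [Finset.sum_mul]
    refine Finset.sum_le_sum fun c _ => ?_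
    rw [mul_assoc]
    exact mul_le_mul_of_nonneg_left (ih c) (M.nonneg s c)

lemma missProb_antitone {m n : ℕ} (hmn : m ≤ n) (s : S) : M.missProb n s ≤ M.missProb m s := by
  obtain ⟨d, rfl⟩ := Nat.exists_eq_add_of_le hmn
  simpa using M.missProb_add_le (fun c => (M.missProb_mem_Icc d c).2) m s

lemma missProb_le_of_pathLen {n : ℕ} {s a : S} (hpath : pathLen M.edge n s a) (ha : a ∈ M.T) :
    M.missProb n s ≤ 1 - M.pmin ^ n := by
  induction n generalizing s with
  | zero =>
    obtain rfl : s = a := hpath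
    simp [missProb_of_mem _ ha]
  | succ n ih =>
    obtain ⟨c, hsc, hpath⟩ := hpath
    have hpow : M.pmin ^ (n + 1) ≤ M.δ s c * (1 - M.missProb n c) := by
      rw [pow_succ']
      exact mul_le_mul (M.pmin_le hsc) (by linarith [ih hpath])
        (pow_nonneg M.pmin_nonneg n) (M.nonneg s c)
    have hcomplement : ∑ b : S, M.δ s b * M.missProb n b
        = 1 - ∑ b : S, M.δ s b * (1 - M.missProb n b) := by
      simp only [mul_sub, mul_one, Finset.sum_sub_distrib, M.rowsum s, sub_sub_cancel]
    have hsingle : M.δ s c * (1 - M.missProb n c) ≤ ∑ b : S, M.δ s b * (1 - M.missProb n b) :=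
      Finset.single_le_sum (fun b _ => mul_nonneg (M.nonneg s b)
        (sub_nonneg.mpr (M.missProb_mem_Icc n b).2)) (Finset.mem_univ c)
    rw [missProb_succ]
    split_ifs
    · exact M.one_sub_pmin_pow_nonneg _
    · linarith

lemma missProb_le_of_hasLevels (hreach : ∀ a : S, reaches M.edge (M.T : Set S) a)
    {k : ℕ} (hlev : M.hasLevels k) (s : S) : M.missProb k s ≤ 1 - M.pmin ^ k := by
  obtain ⟨m, hmk, a, ha, hpath⟩ := M.exists_pathLen_le_of_hasLevels hreach hlev s
  calc M.missProb k s ≤ M.missProb m s := M.missProb_antitone hmk s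
    _ ≤ 1 - M.pmin ^ m := M.missProb_le_of_pathLen hpath ha
    _ ≤ 1 - M.pmin ^ k := sub_le_sub_left (pow_le_pow_of_le_one M.pmin_nonneg M.pmin_le_one hmk) 1

lemma missProb_mul_le_pow (hreach : ∀ a : S, reaches M.edge (M.T : Set S) a)
    {k : ℕ} (hlev : M.hasLevels k) (t : ℕ) (s : S) :
    M.missProb (k * t) s ≤ (1 - M.pmin ^ k) ^ t := by
  induction t generalizing s with
  | zero => simpa using (M.missProb_mem_Icc 0 s).2
  | succ t ih =>
    calc M.missProb (k * (t + 1)) s = M.missProb (k + k * t) s := by ring_nf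
      _ ≤ M.missProb k s * (1 - M.pmin ^ k) ^ t := M.missProb_add_le ih k s
      _ ≤ (1 - M.pmin ^ k) * (1 - M.pmin ^ k) ^ t :=
        mul_le_mul_of_nonneg_right (M.missProb_le_of_hasLevels hreach hlev s)
          (pow_nonneg (M.one_sub_pmin_pow_nonneg k) t)
      _ = (1 - M.pmin ^ k) ^ (t + 1) := (pow_succ' _ _).symm

lemma iterate_reachUpdate_sub (w : S → ℝ) (c : ℝ) (n : ℕ) (s : S) :
    (M.reachUpdate w)^[n] (fun a => if a ∈ M.T then w a else c) s
      - (M.reachUpdate w)^[n] (fun a => if a ∈ M.T then w a else 0) s = c * M.missProb n s := by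
  induction n generalizing s with
  | zero => by_cases hs : s ∈ M.T <;> simp [missProb_zero, hs]
  | succ n ih =>
    simp only [Function.iterate_succ_apply', reachUpdate, missProb_succ]
    split_ifs
    · simp
    · simp only [← Finset.sum_sub_distrib, ← mul_sub, ih, Finset.mul_sum]
      exact Finset.sum_congr rfl fun b _ => by ring

end MC

theorem stmt_1_general {S : Type} [Fintype S] [DecidableEq S]
    (M : MC S) (k : ℕ) (hlev : M.hasLevels k)
    (hreach : ∀ a : S, reaches M.edge (M.T : Set S) a)
    (w : S → ℝ) (hw : ∀ t ∈ M.T, 0 ≤ w t) :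
    ∀ t : ℕ, 1 ≤ t → ∀ i : ℕ, i ≤ k → ∀ s ∈ M.levelSet i,
      (M.reachUpdate w)^[k * t]
          (fun a => if a ∈ M.T then w a else sSup (w '' (M.T : Set S))) s
        - (M.reachUpdate w)^[k * t] (fun a => if a ∈ M.T then w a else 0) s
      ≤ (1 - M.pmin ^ i) * (1 - M.pmin ^ k) ^ (t - 1) * sSup (w '' (M.T : Set S)) := by
  intro t ht i hi s hs
  have hwmax : 0 ≤ sSup (w '' (M.T : Set S)) := by
    refine Real.sSup_nonneg ?_
    rintro _ ⟨a, ha, rfl⟩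
    exact hw a ha
  obtain ⟨a, ha, hpath⟩ := M.exists_pathLen_of_mem_levelSet hreach hs
  obtain ⟨t, rfl⟩ := Nat.exists_eq_add_of_le' ht
  have hmiss : M.missProb (k * (t + 1)) s ≤ (1 - M.pmin ^ i) * (1 - M.pmin ^ k) ^ t :=
    calc M.missProb (k * (t + 1)) s = M.missProb (k + k * t) s := by ring_nf
      _ ≤ M.missProb k s * (1 - M.pmin ^ k) ^ t :=
        M.missProb_add_le (M.missProb_mul_le_pow hreach hlev t) k s
      _ ≤ (1 - M.pmin ^ i) * (1 - M.pmin ^ k) ^ t :=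
        mul_le_mul_of_nonneg_right
          ((M.missProb_antitone hi s).trans (M.missProb_le_of_pathLen hpath ha))
          (pow_nonneg (M.one_sub_pmin_pow_nonneg k) t)
  rw [M.iterate_reachUpdate_sub, Nat.add_sub_cancel, mul_comm]
  exact mul_le_mul_of_nonneg_right hmiss hwmax

/-- Speed of convergence of interval value iteration for weighted
reachability: in a Markov chain with `k ≥ 1` levels in which every state can reach
`T`, after `k·t` Bellman updates starting from the initial lower and upper vectors,
the interval at any state of level `i` has size at most
`(1 - p_min^i)·(1 - p_min^k)^(t-1)·w_max`. -/
theorem stmt_1 {S : Type} [Fintype S] [DecidableEq S] [Nonempty S]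
    (M : MC S) (k : ℕ) (hk : 1 ≤ k) (hlev : M.hasLevels k)
    (hreach : ∀ a : S, reaches M.edge (M.T : Set S) a)
    (w : S → ℝ) (hw : ∀ t ∈ M.T, 0 ≤ w t) :
    ∀ t : ℕ, 1 ≤ t → ∀ i : ℕ, i ≤ k → ∀ s ∈ M.levelSet i,
      (M.reachUpdate w)^[k * t]
          (fun a => if a ∈ M.T then w a else sSup (w '' (M.T : Set S))) s
        - (M.reachUpdate w)^[k * t] (fun a => if a ∈ M.T then w a else 0) s
      ≤ (1 - M.pmin ^ i) * (1 - M.pmin ^ k) ^ (t - 1) * sSup (w '' (M.T : Set S)) :=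
  stmt_1_general M k hlev hreach w hw
end

section
/- Let M be a Markov chain with targets T and weight function w : T → [0,∞) in which every state can reach T along edges, let s ∉ T, and let γ ≥ 0. Let f : S → ℝ be the weighted reachability value vector of the reduced MC M[s = γ], and set γ' := ∑_{s'} δ(s,s') f(s'). Then γ' > γ if and only if val_M(s) > γ, where val_M is the weighted reachability value vector of M. -/
variable {S : Type} [Fintype S] [DecidableEq S]

/-!
Let `h a` be the probability of hitting `s` from `a` and `q = ∑ b, δ s b * h b` the probability
of returning to `s`. The vector `val_M - h * (val_M s - γ)` satisfies the Bellman equations of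
`M[s = γ]`, whose solution is unique by the maximum principle (every state reaches the targets),
so it is the value vector `f` of `M[s = γ]`. Hence `γ' - γ = (1 - q) * (val_M s - γ)`. Finally
`q < 1`: if `q = 1`, then `h` would be harmonic in `M` itself and vanish on `T`, hence vanish
everywhere, although `h s = 1`.
-/

open Finset Filter Topology Matrix

namespace MC

variable (N : MC S)

lemma P_mem_rowStochastic : N.P ∈ rowStochastic ℝ S :=
  mem_rowStochastic_iff_sum.2 ⟨N.nonneg, N.rowsum⟩

lemma pow_mem_rowStochastic (n : ℕ) : N.P ^ n ∈ rowStochastic ℝ S :=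
  pow_mem N.P_mem_rowStochastic n

lemma δ_eq_zero_of_mem_T {t b : S} (ht : t ∈ N.T) (hb : b ≠ t) : N.δ t b = 0 := by
  have hrow := N.rowsum t
  rw [← add_sum_erase _ _ (mem_univ t), N.absorbing t ht, add_eq_left] at hrow
  exact (sum_eq_zero_iff_of_nonneg fun c _ => N.nonneg t c).1 hrow b (by simp [hb])

lemma pow_apply_of_mem_T {t : S} (ht : t ∈ N.T) (n : ℕ) (b : S) :
    (N.P ^ n) t b = (1 : Matrix S S ℝ) t b := by
  induction n with
  | zero => rfl
  | succ n ih =>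
    rw [pow_succ', mul_apply, sum_eq_single t, ← ih]
    · simp [MC.P, N.absorbing t ht]
    · intro c _ hc
      simp [MC.P, N.δ_eq_zero_of_mem_T ht hc]
    · simp

noncomputable def reachValBy (w : S → ℝ) (n : ℕ) (a : S) : ℝ :=
  ∑ t ∈ N.T, (N.P ^ n) a t * w t

lemma reachValBy_succ (w : S → ℝ) (n : ℕ) (a : S) :
    N.reachValBy w (n + 1) a = ∑ b, N.δ a b * N.reachValBy w n b := by
  simp only [reachValBy, pow_succ', mul_apply, sum_mul, mul_sum]
  rw [sum_comm]
  simp only [MC.P, of_apply, mul_assoc]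

variable {N} {w : S → ℝ}

lemma monotone_reachValBy (hw : ∀ t ∈ N.T, 0 ≤ w t) (a : S) :
    Monotone fun n => N.reachValBy w n a := by
  refine monotone_nat_of_le_succ fun n => sum_le_sum fun t ht => ?_
  refine mul_le_mul_of_nonneg_right ?_ (hw t ht)
  calc (N.P ^ n) a t = (N.P ^ n) a t * N.P t t := by simp [MC.P, N.absorbing t ht]
    _ ≤ ∑ c, (N.P ^ n) a c * N.P c t :=
      single_le_sum (f := fun c => (N.P ^ n) a c * N.P c t)
        (fun c _ => mul_nonneg (nonneg_of_mem_rowStochastic (N.pow_mem_rowStochastic n))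
          (N.nonneg c t)) (mem_univ t)
    _ = (N.P ^ (n + 1)) a t := by rw [pow_succ, mul_apply]

lemma reachValBy_le_sum (hw : ∀ t ∈ N.T, 0 ≤ w t) (n : ℕ) (a : S) :
    N.reachValBy w n a ≤ ∑ t ∈ N.T, w t :=
  sum_le_sum fun t ht => mul_le_of_le_one_left (hw t ht)
    (le_one_of_mem_rowStochastic (N.pow_mem_rowStochastic n))

lemma tendsto_reachValBy (hw : ∀ t ∈ N.T, 0 ≤ w t) (a : S) :
    Tendsto (fun n => N.reachValBy w n a) atTop (𝓝 (N.reachVal w a)) :=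
  tendsto_atTop_ciSup (monotone_reachValBy hw a)
    ⟨_, Set.forall_mem_range.2 fun n => reachValBy_le_sum hw n a⟩

lemma reachVal_of_mem_T {t : S} (ht : t ∈ N.T) : N.reachVal w t = w t := by
  have hconst (n : ℕ) : N.reachValBy w n t = w t := by
    rw [reachValBy, sum_eq_single t]
    · simp [N.pow_apply_of_mem_T ht]
    · intro b _ hb
      simp [N.pow_apply_of_mem_T ht, one_apply, Ne.symm hb]
    · exact absurd ht
  change ⨆ n, N.reachValBy w n t = w t
  simp only [hconst, ciSup_const]

lemma reachVal_eq_sum (hw : ∀ t ∈ N.T, 0 ≤ w t) (a : S) :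
    N.reachVal w a = ∑ b, N.δ a b * N.reachVal w b := by
  refine tendsto_nhds_unique ((tendsto_reachValBy hw a).comp (tendsto_add_atTop_nat 1)) ?_
  simp only [Function.comp_def, reachValBy_succ]
  exact tendsto_finsetSum _ fun b _ => (tendsto_reachValBy hw b).const_mul _

lemma reachVal_le_one (hw1 : ∀ t ∈ N.T, w t ≤ 1) (a : S) :
    N.reachVal w a ≤ 1 :=
  ciSup_le fun n => calc
    N.reachValBy w n a ≤ ∑ t ∈ N.T, (N.P ^ n) a t := sum_le_sum fun t ht =>
        mul_le_of_le_one_right (nonneg_of_mem_rowStochastic (N.pow_mem_rowStochastic n)) (hw1 t ht)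
    _ ≤ ∑ t, (N.P ^ n) a t := sum_le_univ_sum_of_nonneg fun _ =>
        nonneg_of_mem_rowStochastic (N.pow_mem_rowStochastic n)
    _ = 1 := sum_row_of_mem_rowStochastic (N.pow_mem_rowStochastic n) a

variable (N) in
def IsHarmonic (d : S → ℝ) : Prop :=
  ∀ a ∉ N.T, d a = ∑ b, N.δ a b * d b

lemma IsHarmonic.sub {d e : S → ℝ} (hd : N.IsHarmonic d) (he : N.IsHarmonic e) :
    N.IsHarmonic (d - e) := fun a ha => by
  simp only [Pi.sub_apply, mul_sub, sum_sub_distrib, ← hd a ha, ← he a ha]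

lemma isHarmonic_reachVal (hw : ∀ t ∈ N.T, 0 ≤ w t) : N.IsHarmonic (N.reachVal w) :=
  fun a _ => reachVal_eq_sum hw a

lemma eq_of_edge_of_isMax {d : S → ℝ} {b c : S} (hmax : ∀ a, d a ≤ d b)
    (hb : d b = ∑ a, N.δ b a * d a) (hbc : N.edge b c) : d c = d b := by
  have hsum : ∑ a, N.δ b a * (d b - d a) = 0 := by
    simp only [mul_sub, sum_sub_distrib, ← sum_mul, N.rowsum, one_mul, ← hb, sub_self]
  have hterm := (sum_eq_zero_iff_of_nonneg fun a _ =>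
    mul_nonneg (N.nonneg b a) (sub_nonneg.2 (hmax a))).1 hsum c (mem_univ c)
  linarith [(mul_eq_zero.1 hterm).resolve_left hbc.ne']

theorem IsHarmonic.nonpos (hreach : ∀ a, reaches N.edge (N.T : Set S) a) {d : S → ℝ}
    (hd : N.IsHarmonic d) (hT : ∀ t ∈ N.T, d t ≤ 0) (a : S) : d a ≤ 0 := by
  by_contra! ha
  have : Nonempty S := ⟨a⟩
  obtain ⟨m, hm⟩ := Finite.exists_max d
  have hpos : 0 < d m := ha.trans_le (hm a)
  have hprop (n : ℕ) : ∀ b c, pathLen N.edge n b c → d b = d m → d c = d m := by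
    induction n with
    | zero => rintro b c rfl h; exact h
    | succ n ih =>
      rintro b c ⟨b', hbb', hpath⟩ hb
      have hbT : b ∉ N.T := fun hbT => (hT b hbT).not_gt (hb ▸ hpos)
      exact ih b' c hpath ((eq_of_edge_of_isMax (hb ▸ hm) (hd b hbT) hbb').trans hb)
  obtain ⟨n, t, ht, hpath⟩ := hreach m
  exact (hT t ht).not_gt (hprop n m t hpath rfl ▸ hpos)

theorem IsHarmonic.eq_reachVal (hreach : ∀ a, reaches N.edge (N.T : Set S) a)
    (hw : ∀ t ∈ N.T, 0 ≤ w t) {u : S → ℝ} (hu : N.IsHarmonic u) (hT : ∀ t ∈ N.T, u t = w t) :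
    u = N.reachVal w := by
  have hbdry : ∀ t ∈ N.T, u t = N.reachVal w t := fun t ht => by
    rw [hT t ht, reachVal_of_mem_T ht]
  have hv := isHarmonic_reachVal hw
  funext a
  refine le_antisymm (sub_nonpos.1 ?_) (sub_nonpos.1 ?_)
  · exact (hu.sub hv).nonpos hreach (fun t ht => by simp [hbdry t ht]) a
  · exact (hv.sub hu).nonpos hreach (fun t ht => by simp [hbdry t ht]) a

section Reduce

variable (M : MC S) (s : S)

@[simp] lemma reduce_T : (M.reduce s).T = insert s M.T := rfl

lemma reduce_δ_of_ne {a : S} (ha : a ≠ s) (b : S) : (M.reduce s).δ a b = M.δ a b := by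
  simp [MC.reduce, ha]

lemma reaches_reduce {a : S} (ha : reaches M.edge (M.T : Set S) a) :
    reaches (M.reduce s).edge ((M.reduce s).T : Set S) a := by
  obtain ⟨n, t, ht, hpath⟩ := ha
  induction n generalizing a with
  | zero => exact ⟨0, t, by simp [ht], hpath⟩
  | succ n ih =>
    by_cases has : a = s
    · exact ⟨0, a, by simp [has], rfl⟩
    · obtain ⟨b, hab, hpath⟩ := hpath
      obtain ⟨m, t', ht', hpath'⟩ := ih hpath
      exact ⟨m + 1, t', ht', b, by rwa [MC.edge, reduce_δ_of_ne M s has], hpath'⟩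

lemma hitProb_self : M.hitProb s s = 1 := by
  simp [hitProb, reachVal_of_mem_T (N := M.reduce s) (mem_insert_self s M.T)]

lemma hitProb_of_mem_T {t : S} (ht : t ∈ M.T) (hts : t ≠ s) : M.hitProb t s = 0 := by
  simp [hitProb, reachVal_of_mem_T (N := M.reduce s) (mem_insert_of_mem ht), hts]

lemma hitProb_eq_sum {a : S} (ha : a ≠ s) : M.hitProb a s = ∑ b, M.δ a b * M.hitProb b s := by
  simp only [hitProb, ← reduce_δ_of_ne M s ha]
  exact reachVal_eq_sum (fun t _ => by split_ifs <;> norm_num) a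

lemma hitProb_le_one (a : S) : M.hitProb a s ≤ 1 :=
  reachVal_le_one (fun t _ => by split_ifs <;> norm_num) a

variable {M s}

theorem sum_δ_mul_hitProb_lt_one (hreach : ∀ a, reaches M.edge (M.T : Set S) a)
    (hs : s ∉ M.T) : ∑ b, M.δ s b * M.hitProb b s < 1 := by
  refine lt_of_le_of_ne ?_ fun hreturn => ?_
  · calc ∑ b, M.δ s b * M.hitProb b s ≤ ∑ b, M.δ s b :=
          sum_le_sum fun b _ => mul_le_of_le_one_right (M.nonneg s b) (M.hitProb_le_one s b)
      _ = 1 := M.rowsum s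
  · have hharm : M.IsHarmonic (M.hitProb · s) := fun a _ => by
      by_cases has : a = s
      · rw [has, hreturn]
        exact M.hitProb_self s
      · exact M.hitProb_eq_sum s has
    have hT (t : S) (ht : t ∈ M.T) : M.hitProb t s ≤ 0 :=
      (M.hitProb_of_mem_T s ht (ne_of_mem_of_not_mem ht hs)).le
    linarith [hharm.nonpos hreach hT s, M.hitProb_self s]

theorem reachVal_reduce_update (hreach : ∀ a, reaches M.edge (M.T : Set S) a)
    (hw : ∀ t ∈ M.T, 0 ≤ w t) (hs : s ∉ M.T) {γ : ℝ} (hγ : 0 ≤ γ) :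
    (M.reduce s).reachVal (Function.update w s γ) =
      fun a => M.reachVal w a - M.hitProb a s * (M.reachVal w s - γ) := by
  refine (IsHarmonic.eq_reachVal (fun a => M.reaches_reduce s (hreach a)) ?_ ?_ ?_).symm
  · intro t ht
    rcases mem_insert.1 ht with rfl | ht
    · simpa using hγ
    · simpa [ne_of_mem_of_not_mem ht hs] using hw t ht
  · intro a ha
    obtain ⟨has, -⟩ : a ≠ s ∧ a ∉ M.T := by simpa using ha
    simp only [reduce_δ_of_ne M s has, mul_sub, sum_sub_distrib, ← mul_assoc, ← sum_mul]
    rw [← reachVal_eq_sum hw, ← M.hitProb_eq_sum s has]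
  · intro t ht
    rcases mem_insert.1 ht with rfl | ht
    · simp [hitProb_self]
    · have hts := ne_of_mem_of_not_mem ht hs
      simp [M.hitProb_of_mem_T s ht hts, reachVal_of_mem_T ht, hts]

end Reduce

end MC

theorem stmt_3_general {S : Type} [Fintype S] [DecidableEq S]
    (M : MC S) (hreach : ∀ a : S, reaches M.edge (M.T : Set S) a)
    (w : S → ℝ) (hw : ∀ t ∈ M.T, 0 ≤ w t)
    (s : S) (hs : s ∉ M.T) (γ : ℝ) (hγ : 0 ≤ γ) :
    γ < ∑ s' : S, M.δ s s' * (M.reduce s).reachVal (Function.update w s γ) s'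
      ↔ γ < M.reachVal w s := by
  set V := M.reachVal w s
  set q := ∑ b, M.δ s b * M.hitProb b s
  have hq : q < 1 := MC.sum_δ_mul_hitProb_lt_one hreach hs
  have hγ' : ∑ s', M.δ s s' * (M.reduce s).reachVal (Function.update w s γ) s' =
      V - q * (V - γ) := by
    simp only [MC.reachVal_reduce_update hreach hw hs hγ, mul_sub, sum_sub_distrib, ← mul_assoc,
      ← sum_mul, q, V, ← MC.reachVal_eq_sum hw]
  rw [hγ', ← sub_pos, ← sub_pos (b := γ), show V - q * (V - γ) - γ = (1 - q) * (V - γ) by ring,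
    mul_pos_iff_of_pos_left (sub_pos.2 hq)]

/-- Guess verification in Markov chains: let `f` be the weighted
reachability value vector of the reduced Markov chain `M[s = γ]` and
`γ' = ∑_{s'} δ(s,s')·f(s')`. Then `γ' > γ` iff `val_M(s) > γ`. -/
theorem stmt_3 {S : Type} [Fintype S] [DecidableEq S] [Nonempty S]
    (M : MC S) (hreach : ∀ a : S, reaches M.edge (M.T : Set S) a)
    (w : S → ℝ) (hw : ∀ t ∈ M.T, 0 ≤ w t)
    (s : S) (hs : s ∉ M.T) (γ : ℝ) (hγ : 0 ≤ γ) :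
    γ < ∑ s' : S, M.δ s s' * (M.reduce s).reachVal (Function.update w s γ) s'
      ↔ γ < M.reachVal w s :=
  stmt_3_general M hreach w hw s hs γ hγ
end

section
/- Let M be a Markov chain with targets T and weight function w : S → (0,∞) in which every state can reach T along edges; let s ∉ T, and let γ, ε ∈ ℝ with ε > 0 and γ − ε > 0. Then for every state s' ∈ S with s' ≠ s: val_{M[s=γ]}(s') = val_{M[s=γ−ε]}(s') + ε · P_{s'}(∃ t ≥ 0 : X_t = s), where val_{M[s=γ]} and val_{M[s=γ−ε]} are the stochastic shortest path (SSP) value vectors of the respective reduced MCs, and the probability of ever visiting s is taken in M. -/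
variable {S : Type} [Fintype S] [DecidableEq S]

namespace MC

variable {S : Type} [Fintype S] [DecidableEq S] (M : MC S)

lemma P_mem_rowStochastic_s9 : M.P ∈ Matrix.rowStochastic ℝ S :=
  Matrix.mem_rowStochastic_iff_sum.2 ⟨M.nonneg, M.rowsum⟩

lemma pow_P_apply_nonneg (n : ℕ) (a b : S) : 0 ≤ (M.P ^ n) a b :=
  Matrix.nonneg_of_mem_rowStochastic (pow_mem M.P_mem_rowStochastic_s9 n)

lemma pow_P_apply_le_one (n : ℕ) (a b : S) : (M.P ^ n) a b ≤ 1 :=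
  Matrix.le_one_of_mem_rowStochastic (pow_mem M.P_mem_rowStochastic_s9 n)

/-- Mass that has reached an absorbing target never leaves it. -/
lemma monotone_pow_P_apply_of_mem_T {t : S} (ht : t ∈ M.T) (a : S) :
    Monotone fun n => (M.P ^ n) a t := by
  refine monotone_nat_of_le_succ fun n => ?_
  have hstay : M.P t t = 1 := M.absorbing t ht
  calc (M.P ^ n) a t = (M.P ^ n) a t * M.P t t := by rw [hstay, mul_one]
    _ ≤ ∑ x, (M.P ^ n) a x * M.P x t :=
        Finset.single_le_sum (f := fun x => (M.P ^ n) a x * M.P x t)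
          (fun x _ => mul_nonneg (M.pow_P_apply_nonneg n a x) (M.nonneg x t))
          (Finset.mem_univ t)
    _ = (M.P ^ (n + 1)) a t := by rw [pow_succ, Matrix.mul_apply]

lemma tendsto_reachVal {w : S → ℝ} (hw : ∀ t, 0 ≤ w t) (a : S) :
    Filter.Tendsto (fun n => ∑ t ∈ M.T, (M.P ^ n) a t * w t) Filter.atTop
      (nhds (M.reachVal w a)) := by
  refine tendsto_atTop_ciSup (fun n m hnm => ?_) ⟨∑ t ∈ M.T, w t, ?_⟩
  · exact Finset.sum_le_sum fun t ht =>
      mul_le_mul_of_nonneg_right (M.monotone_pow_P_apply_of_mem_T ht a hnm) (hw t)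
  · rintro x ⟨n, rfl⟩
    exact Finset.sum_le_sum fun t _ =>
      mul_le_of_le_one_left (hw t) (M.pow_P_apply_le_one n a t)

lemma reachVal_add_mul {w₁ w₂ : S → ℝ} (hw₁ : ∀ t, 0 ≤ w₁ t) (hw₂ : ∀ t, 0 ≤ w₂ t)
    {c : ℝ} (hc : 0 ≤ c) (a : S) :
    M.reachVal (fun t => w₁ t + c * w₂ t) a = M.reachVal w₁ a + c * M.reachVal w₂ a := by
  have hw : ∀ t, 0 ≤ w₁ t + c * w₂ t := fun t =>
    add_nonneg (hw₁ t) (mul_nonneg hc (hw₂ t))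
  refine tendsto_nhds_unique (M.tendsto_reachVal hw a) ?_
  convert (M.tendsto_reachVal hw₁ a).add ((M.tendsto_reachVal hw₂ a).const_mul c) using 2
  rw [Finset.mul_sum, ← Finset.sum_add_distrib]
  exact Finset.sum_congr rfl fun t _ => by ring

/-- Before absorption only weights of non-target states are collected. -/
lemma sspVal_sub_sspVal {w₁ w₂ : S → ℝ} (h : ∀ x ∉ M.T, w₁ x = w₂ x) (a : S) :
    M.sspVal w₁ a - M.sspVal w₂ a = M.reachVal w₁ a - M.reachVal w₂ a := by
  have hpre : (∑' n : ℕ, ∑ x ∈ Finset.univ.filter (· ∉ M.T), (M.P ^ n) a x * w₁ x)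
      = ∑' n : ℕ, ∑ x ∈ Finset.univ.filter (· ∉ M.T), (M.P ^ n) a x * w₂ x :=
    tsum_congr fun n => Finset.sum_congr rfl fun x hx => by rw [h x (Finset.mem_filter.1 hx).2]
  rw [sspVal, sspVal, hpre]
  ring

end MC

theorem stmt_9_general {S : Type} [Fintype S] [DecidableEq S]
    (M : MC S)
    (w : S → ℝ) (hw : ∀ a : S, 0 < w a)
    (s : S) (γ ε : ℝ) (hε : 0 < ε) (hγε : 0 < γ - ε) :
    ∀ s' : S, s' ≠ s →
      (M.reduce s).sspVal (Function.update w s γ) s'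
        = (M.reduce s).sspVal (Function.update w s (γ - ε)) s'
          + ε * M.hitProb s' s := by
  intro s' _
  have hsplit : Function.update w s γ
      = fun t => Function.update w s (γ - ε) t + ε * (if t = s then 1 else 0) := by
    funext t
    by_cases ht : t = s
    · subst ht; simp
    · simp [ht]
  have hlow : ∀ t, 0 ≤ Function.update w s (γ - ε) t := by
    intro t
    by_cases ht : t = s
    · subst ht; simpa using hγε.le
    · simpa [ht] using (hw t).le
  have hind : ∀ t : S, (0 : ℝ) ≤ if t = s then 1 else 0 := fun t => by split_ifs <;> norm_num
  have hoff : ∀ x ∉ (M.reduce s).T,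
      Function.update w s γ x = Function.update w s (γ - ε) x := by
    intro x hx
    have hxs : x ≠ s := fun h => hx (h ▸ Finset.mem_insert_self s M.T)
    simp [hxs]
  have hreach := (M.reduce s).reachVal_add_mul hlow hind hε.le s'
  rw [← hsplit] at hreach
  rw [MC.hitProb]
  linarith [(M.reduce s).sspVal_sub_sspVal hoff s']

/-- Sensitivity of SSP values of reduced chains in the guess:
for every state `s' ≠ s`,
`val_{M[s=γ]}(s') = val_{M[s=γ-ε]}(s') + ε · P_{s'}(∃ t ≥ 0, X_t = s)`,
where the values are the stochastic shortest path values of the reduced chains. -/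
theorem stmt_9 {S : Type} [Fintype S] [DecidableEq S] [Nonempty S]
    (M : MC S) (hreach : ∀ a : S, reaches M.edge (M.T : Set S) a)
    (w : S → ℝ) (hw : ∀ a : S, 0 < w a)
    (s : S) (hs : s ∉ M.T) (γ ε : ℝ) (hε : 0 < ε) (hγε : 0 < γ - ε) :
    ∀ s' : S, s' ≠ s →
      (M.reduce s).sspVal (Function.update w s γ) s'
        = (M.reduce s).sspVal (Function.update w s (γ - ε)) s'
          + ε * M.hitProb s' s :=
  stmt_9_general M w hw s γ ε hε hγε
end
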